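/- Let n ≥ 2 and let (m₁,…,mₙ) be a nonzero vector in ℤⁿ with gcd(m₁,…,mₙ) = 1. Then there exist vectors v_i = (v_{i,1},…,v_{i,n}) ∈ ℤⁿ for 1 ≤ i ≤ n−1 such that |v_{i,j}| ≤ max(|m_j|, 1) for all 1 ≤ j ≤ n, and the vector (m₁,…,mₙ) together with the vectors v₁,…,v_{n−1} form a ℤ-basis of ℤⁿ. -/

import Mathlib

/-!
Induction on `n`. Write `m = (x, g • u)` where `g` is the gcd of the tail of `m`, so that `u` is
primitive, and complete `u` by induction to a unimodular matrix `V` with `V 0 = u`. A Bezout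
relation `x * a - b * g = 1` with `0 ≤ a < |g|` gives the new rows `(b, a • u)` and `(0, V i)`,
`i ≠ 0`: the determinant becomes `(x * a - b * g) * det V`, the reduction of `a` gives
`|a * u j| ≤ |g * u j|`, and `|b| * |g| = |x * a - 1| ≤ |x| * (|g| - 1) + 1` bounds `b`.
-/

open Finset Matrix

theorem Fin.gcd_univ_succ {α : Type*} [CommMonoidWithZero α] [NormalizedGCDMonoid α]
    {k : ℕ} (m : Fin (k + 1) → α) :
    univ.gcd m = gcd (m 0) (univ.gcd (Fin.tail m)) := by
  rw [Fin.univ_succ, cons_eq_insert, gcd_insert, map_eq_image, gcd_image]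
  rfl

theorem Int.exists_mul_sub_mul_eq_one_of_isCoprime {x g : ℤ} (h : IsCoprime x g) (hg : g ≠ 0) :
    ∃ a b : ℤ, x * a - b * g = 1 ∧ 0 ≤ a ∧ a < |g| ∧ |b| ≤ max |x| 1 := by
  obtain ⟨c, d, hcd⟩ := h
  set a := c % g
  set b := -(d + x * (c / g))
  have hab : x * a - b * g = 1 := by linear_combination hcd + x * Int.emod_add_mul_ediv c g
  have ha₀ : 0 ≤ a := Int.emod_nonneg c hg
  have ha : a < |g| := Int.emod_lt_abs c hg
  refine ⟨a, b, hab, ha₀, ha, le_of_mul_le_mul_right ?_ (abs_pos.2 hg)⟩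
  calc |b| * |g| = |x * a - 1| := by rw [← abs_mul, ← hab, sub_sub_cancel]
    _ ≤ |x| * a + 1 := by simpa [abs_mul, abs_of_nonneg ha₀] using abs_sub (x * a) 1
    _ ≤ max |x| 1 * (|g| - 1) + 1 := by gcongr <;> first | exact le_max_left _ _ | omega
    _ ≤ max |x| 1 * |g| := by linarith [le_max_right |x| 1]

variable {k : ℕ}

namespace Matrix

variable {R : Type*} [CommRing R]

def extendRows (V : Matrix (Fin (k + 1)) (Fin (k + 1)) R) (x y z w : R) :
    Matrix (Fin (k + 2)) (Fin (k + 2)) R :=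
  of (Fin.cons (Fin.cons x (y • V 0))
    (Fin.cons (Fin.cons z (w • V 0)) fun i => Fin.cons 0 (V i.succ)))

theorem det_extendRows (V : Matrix (Fin (k + 1)) (Fin (k + 1)) R) (x y z w : R) :
    (V.extendRows x y z w).det = (x * w - z * y) * V.det := by
  have minor (r : R) : (V.updateRow 0 (r • V 0)).det = r * V.det := by
    rw [det_updateRow_smul, updateRow_eq_self]
  have h₀ : (V.extendRows x y z w).submatrix (Fin.succAbove 0) Fin.succ =
      V.updateRow 0 (w • V 0) := by
    ext i j
    refine Fin.cases ?_ (fun i => ?_) i <;> simp [extendRows, updateRow_ne]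
  have h₁ : (V.extendRows x y z w).submatrix (Fin.succAbove (Fin.succ 0)) Fin.succ =
      V.updateRow 0 (y • V 0) := by
    ext i j
    refine Fin.cases ?_ (fun i => ?_) i <;> simp [extendRows, updateRow_ne]
  rw [det_succ_column_zero, Fin.sum_univ_succ, Fin.sum_univ_succ, h₀, h₁, minor, minor]
  simp only [extendRows, of_apply, Fin.cons_zero, Fin.cons_one, Fin.cons_succ,
    Fin.succ_zero_eq_one, Fin.val_succ, Fin.coe_ofNat_eq_mod, Nat.zero_mod, Nat.one_mod,
    pow_zero, pow_one, one_mul, neg_mul, mul_zero, zero_mul, sum_const_zero, add_zero]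
  ring

end Matrix

structure IsBoundedCompletion (m : Fin (k + 1) → ℤ)
    (v : Matrix (Fin (k + 1)) (Fin (k + 1)) ℤ) : Prop where
  row_zero : v 0 = m
  abs_le : ∀ i j, i ≠ 0 → |v i j| ≤ max |m j| 1
  isUnit_det : IsUnit v.det

theorem isBoundedCompletion_single_one :
    IsBoundedCompletion (Pi.single 0 1) (1 : Matrix (Fin (k + 1)) (Fin (k + 1)) ℤ) where
  row_zero := by ext j; simp [one_apply, Pi.single_apply, eq_comm]
  abs_le i j _ := by by_cases h : i = j <;> simp [one_apply, h]
  isUnit_det := by simp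

theorem IsBoundedCompletion.extendRows {u : Fin (k + 1) → ℤ}
    {V : Matrix (Fin (k + 1)) (Fin (k + 1)) ℤ} (hV : IsBoundedCompletion u V) {x g a b : ℤ}
    (hab : x * a - b * g = 1) (hb : |b| ≤ max |x| 1) (ha : ∀ j, |a * u j| ≤ max |g * u j| 1)
    (hu : ∀ j, max |u j| 1 ≤ max |g * u j| 1) :
    IsBoundedCompletion (Fin.cons x (g • u)) (V.extendRows x g b a) where
  row_zero := by rw [← hV.row_zero]; rfl
  abs_le i j hi := by
    obtain ⟨i, rfl⟩ := Fin.exists_succ_eq.2 hi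
    cases i using Fin.cases with
    | zero =>
      cases j using Fin.cases with
      | zero => exact hb
      | succ j => simpa [Matrix.extendRows, hV.row_zero] using ha j
    | succ i =>
      cases j using Fin.cases with
      | zero => simp [Matrix.extendRows]
      | succ j => exact (hV.abs_le _ j i.succ_ne_zero).trans (hu j)
  isUnit_det := by
    rw [det_extendRows, hab, one_mul]
    exact hV.isUnit_det

theorem exists_isBoundedCompletion_cons_zero {x : ℤ} (hx : IsUnit x) :
    ∃ v, IsBoundedCompletion (Fin.cons x 0 : Fin (k + 2) → ℤ) v := by
  have hs (j : Fin (k + 1)) : |(Pi.single 0 1 : Fin (k + 1) → ℤ) j| ≤ 1 := by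
    rcases eq_or_ne j 0 with rfl | h
    · simp
    · simp [h]
  have hcons : (Fin.cons x 0 : Fin (k + 2) → ℤ) = Fin.cons x ((0 : ℤ) • Pi.single 0 1) := by
    rw [zero_smul]
  rw [hcons]
  refine ⟨_, isBoundedCompletion_single_one.extendRows (a := x) (b := 0) ?_ ?_ ?_ ?_⟩
  · simpa using Int.isUnit_mul_self hx
  · simp
  · simpa [abs_mul, Int.isUnit_iff_abs_eq.1 hx] using hs
  · simpa using hs

theorem exists_isBoundedCompletion :
    ∀ {k : ℕ} (m : Fin (k + 1) → ℤ), univ.gcd m = 1 → ∃ v, IsBoundedCompletion m v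
  | 0, m, hm => by
    have hm₀ : IsUnit (m 0) := normalize_eq_one.1 (by simpa [Fin.gcd_univ_succ] using hm)
    exact ⟨of fun _ => m, rfl, fun i _ hi => (hi (Fin.eq_zero i)).elim, by simpa⟩
  | k + 1, m, hm => by
    set g := univ.gcd (Fin.tail m)
    have hcop : IsCoprime (m 0) g :=
      (gcd_isUnit_iff _ _).1 (by rw [← Fin.gcd_univ_succ, hm]; exact isUnit_one)
    obtain ⟨u, hu, hu₁⟩ := extract_gcd (Fin.tail m) univ_nonempty
    have htail : Fin.tail m = g • u := funext fun j => hu j (mem_univ j)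
    rcases eq_or_ne g 0 with hg | hg
    · rw [← Fin.cons_self_tail m, htail, hg, zero_smul]
      exact exists_isBoundedCompletion_cons_zero (isCoprime_zero_right.1 (hg ▸ hcop))
    obtain ⟨V, hV⟩ := exists_isBoundedCompletion u hu₁
    obtain ⟨a, b, hab, ha₀, ha, hb⟩ := Int.exists_mul_sub_mul_eq_one_of_isCoprime hcop hg
    have hau (j) : |a * u j| ≤ |g * u j| := by
      rw [abs_mul, abs_mul, abs_of_nonneg ha₀]
      exact mul_le_mul_of_nonneg_right ha.le (abs_nonneg _)
    have hgu (j) : |u j| ≤ |g * u j| := by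
      rw [abs_mul]
      exact le_mul_of_one_le_left (abs_nonneg _) (Int.one_le_abs hg)
    rw [← Fin.cons_self_tail m, htail]
    exact ⟨_, hV.extendRows hab hb (fun j => le_max_of_le_left (hau j))
      (fun j => max_le_max (hgu j) le_rfl)⟩

/-- Let `n ≥ 2` and `(m₁,…,mₙ)` a nonzero vector in `ℤⁿ` with
`gcd(m₁,…,mₙ) = 1`.  Then there are `n−1` further rows, each bounded entrywise by
`max |m_j| 1`, such that together with `m` (as row `0`) they form a matrix in `GLₙ(ℤ)`,
i.e. a ℤ-basis of `ℤⁿ`. -/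
theorem stmt0 (n : ℕ) (hn : 2 ≤ n) (m : Fin n → ℤ)
    (hgcd : Finset.univ.gcd m = 1) :
    ∃ v : Fin n → Fin n → ℤ,
      v ⟨0, by omega⟩ = m ∧
      (∀ i j : Fin n, i ≠ ⟨0, by omega⟩ → |v i j| ≤ max |m j| 1) ∧
      IsUnit (Matrix.det (Matrix.of v)) := by
  obtain ⟨k, rfl⟩ : ∃ k, n = k + 1 := ⟨n - 1, by omega⟩
  obtain ⟨v, hv⟩ := exists_isBoundedCompletion m hgcd
  exact ⟨v, hv.row_zero, hv.abs_le, hv.isUnit_det⟩
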